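/- Let p ≥ 3 be a prime and let 3 ≤ r < s be integers with (r-1) ∤ (s-1), and let g be the least positive residue of s-1 modulo r-1. Suppose d ∈ Biv*(s,r) satisfies h_p(δ^{-1}(d)) = min h_p and 2g ≤ r-2. Then θ_max(d) = 1; that is, every maximal block of consecutive entries [q+1] in d is a singleton, so d contains exactly g entries [q+1], no two of them adjacent, and d contains exactly g+1 maximal [q]-blocks, whose average length is q_1 = (r-g-1)/(g+1). -/

import Mathlib

/-
Write `x_j = p^(-d_j)` and give a word the value `v (c :: w) = p^(-c) * (1 + v w)`.
Transposing two adjacent letters `d_m, d_{m+1}` of the delta vector moves only the partial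
sum `a_{m+1}`, and changes `h_p` by `(x_{m+1} - x_m) * (v L - v R)`, where `L` is the word read
leftwards from `m - 1` and `R` the word read rightwards from `m + 2`. For `p ≥ 3` and positive
letters `v` orders words lexicographically (larger letters first), so minimality of `h_p`
becomes a lexicographic condition at every boundary between two different letters.

If `d` had two adjacent `[q]+1`, then, since there are only `g` of them and `2g < r - 1`,
`d` would also contain two adjacent `[q]`. Take such pairs as close as possible, the `[q]+1`
pair first (the other order follows by reversing `d`). The letters strictly between them
alternate, and a comparison of the words on both sides shows that either the boundary just
after the `[q]+1` pair, or the one just before it, carries a transposition that lowers `h_p`.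
The counting statements then follow from `#{d_j = [q]+1} = g`.
-/

/-- `A(s,r)`: admissible exponent tuples, viewed as functions `ℕ → ℤ` whose relevant
entries are indices `0,…,r-1`: strictly increasing with `a 0 = 0` and `a (r-1) = s-1`. -/
def Admissible (s r : ℕ) (a : ℕ → ℤ) : Prop :=
  a 0 = 0 ∧ a (r - 1) = (s : ℤ) - 1 ∧ ∀ i, i + 1 < r → a i < a (i + 1)

/-- `h_p(x) = Σ_{k<i≤r} p^{-(x_i - x_k)}` (indices `0,…,r-1`). -/
noncomputable def hp (p r : ℕ) (a : ℕ → ℤ) : ℝ :=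
  ∑ k ∈ Finset.range r, ∑ i ∈ Finset.range r,
    if k < i then (p : ℝ) ^ (a k - a i) else 0

/-- `δ⁻¹(d) = (0, d₁, d₁+d₂, …)`: the exponent tuple with delta vector `d`. -/
def deltaInv (d : ℕ → ℤ) (i : ℕ) : ℤ := ∑ j ∈ Finset.range i, d j

/-- `IsMaxRun n d v i l`: within the vector `(d 0, …, d (n-1))`, the entries
`d i, …, d (i+l-1)` form a maximal block of consecutive entries equal to `v`
(of length `l ≥ 1`). -/
def IsMaxRun (n : ℕ) (d : ℕ → ℤ) (v : ℤ) (i l : ℕ) : Prop :=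
  0 < l ∧ i + l ≤ n ∧ (∀ k < l, d (i + k) = v) ∧
    (0 < i → d (i - 1) ≠ v) ∧ (i + l < n → d (i + l) ≠ v)

open Finset

noncomputable def wordValue (p : ℕ) : List ℤ → ℝ
  | [] => 0
  | a :: l => (p : ℝ) ^ (-a) * (1 + wordValue p l)

def leftWord (d : ℕ → ℤ) (m : ℕ) : List ℤ := (List.range m).reverse.map d

def rightWord (d : ℕ → ℤ) (n k : ℕ) : List ℤ := (List.range' k (n - k)).map d

@[simp] lemma leftWord_zero (d : ℕ → ℤ) : leftWord d 0 = [] := rfl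

lemma leftWord_succ (d : ℕ → ℤ) (m : ℕ) : leftWord d (m + 1) = d m :: leftWord d m := by
  simp [leftWord, List.range_succ]

lemma rightWord_of_le (d : ℕ → ℤ) {n k : ℕ} (h : n ≤ k) : rightWord d n k = [] := by
  simp [rightWord, Nat.sub_eq_zero_of_le h]

lemma rightWord_of_lt (d : ℕ → ℤ) {n k : ℕ} (h : k < n) :
    rightWord d n k = d k :: rightWord d n (k + 1) := by
  obtain ⟨t, ht⟩ : ∃ t, n - k = t + 1 := ⟨n - k - 1, by omega⟩
  rw [rightWord, rightWord, ht, List.range'_succ, show n - (k + 1) = t by omega]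
  rfl

lemma forall_mem_leftWord {d : ℕ → ℤ} {m : ℕ} {P : ℤ → Prop} (h : ∀ j < m, P (d j)) :
    ∀ x ∈ leftWord d m, P x := by
  simpa [leftWord] using h

lemma forall_mem_rightWord {d : ℕ → ℤ} {n k : ℕ} {P : ℤ → Prop} (h : ∀ j < n, P (d j)) :
    ∀ x ∈ rightWord d n k, P x := by
  simp only [rightWord, List.mem_map, List.mem_range'_1]
  rintro _ ⟨j, hj, rfl⟩
  exact h j (by omega)

section WordValue

variable {p : ℕ}

lemma wordValue_nonneg (hp0 : 0 < p) : ∀ l : List ℤ, 0 ≤ wordValue p l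
  | [] => le_rfl
  | a :: l => mul_nonneg (by positivity) (by linarith [wordValue_nonneg hp0 l])

lemma wordValue_cons_pos (hp0 : 0 < p) (a : ℤ) (l : List ℤ) : 0 < wordValue p (a :: l) :=
  mul_pos (by positivity) (by linarith [wordValue_nonneg hp0 l])

lemma zpow_neg_le_inv_three_mul (hp3 : 3 ≤ p) {a b : ℤ} (h : b < a) :
    (p : ℝ) ^ (-a) ≤ 3⁻¹ * (p : ℝ) ^ (-b) := by
  have hp1 : (1 : ℝ) ≤ p := by exact_mod_cast (by omega : 1 ≤ p)
  calc (p : ℝ) ^ (-a) ≤ (p : ℝ) ^ (-b - 1) := zpow_le_zpow_right₀ hp1 (by omega)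
    _ = (p : ℝ)⁻¹ * (p : ℝ) ^ (-b) := by
        rw [zpow_sub₀ (by positivity), zpow_one, div_eq_inv_mul]
    _ ≤ 3⁻¹ * (p : ℝ) ^ (-b) := by
        gcongr
        exact_mod_cast hp3

lemma wordValue_le_half (hp3 : 3 ≤ p) : ∀ l : List ℤ, (∀ x ∈ l, 1 ≤ x) → wordValue p l ≤ 2⁻¹
  | [], _ => by norm_num [wordValue]
  | a :: l, hl => by
    have ha : (p : ℝ) ^ (-a) ≤ 3⁻¹ := by
      simpa using zpow_neg_le_inv_three_mul hp3 (by linarith [hl a (by simp)] : (0 : ℤ) < a)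
    have hl' := wordValue_le_half hp3 l fun x hx => hl x (by simp [hx])
    have h0 : 0 ≤ wordValue p l := wordValue_nonneg (by omega) l
    have : (0 : ℝ) < (p : ℝ) ^ (-a) := by positivity
    simp only [wordValue]
    nlinarith

lemma wordValue_lt_of_lex (hp3 : 3 ≤ p) {l₁ l₂ : List ℤ} (h : List.Lex (· > ·) l₁ l₂)
    (h₁ : ∀ x ∈ l₁, 1 ≤ x) (h₂ : ∀ x ∈ l₂, 1 ≤ x) : wordValue p l₁ < wordValue p l₂ := by
  induction h with
  | nil => exact wordValue_cons_pos (by omega) _ _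
  | @cons a l₁ l₂ _ ih =>
    have := ih (fun x hx => h₁ x (by simp [hx])) (fun x hx => h₂ x (by simp [hx]))
    have : (0 : ℝ) < (p : ℝ) ^ (-a) := by positivity
    simp only [wordValue]
    nlinarith
  | @rel a₁ l₁ a₂ l₂ hlt =>
    have hx := zpow_neg_le_inv_three_mul hp3 hlt
    have hv := wordValue_le_half hp3 l₁ fun x hx => h₁ x (by simp [hx])
    have h0 := wordValue_nonneg (by omega : 0 < p) l₂
    have : (0 : ℝ) < (p : ℝ) ^ (-a₁) := by positivity
    have : (0 : ℝ) < (p : ℝ) ^ (-a₂) := by positivity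
    simp only [wordValue]
    nlinarith

end WordValue

section Swap

variable {p : ℕ}

lemma deltaInv_succ (d : ℕ → ℤ) (m : ℕ) : deltaInv d (m + 1) = deltaInv d m + d m :=
  sum_range_succ d m

lemma sum_zpow_deltaInv_left (hp0 : 0 < p) (d : ℕ → ℤ) (m : ℕ) :
    ∑ k ∈ range m, (p : ℝ) ^ (deltaInv d k - deltaInv d m) = wordValue p (leftWord d m) := by
  induction m with
  | zero => rfl
  | succ m ih =>
    have hx : ∀ k, (p : ℝ) ^ (deltaInv d k - deltaInv d (m + 1))
        = (p : ℝ) ^ (-d m) * (p : ℝ) ^ (deltaInv d k - deltaInv d m) := fun k => by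
      rw [← zpow_add₀ (by positivity), deltaInv_succ]; ring_nf
    simp only [hx, ← mul_sum, sum_range_succ, ih, leftWord_succ, wordValue, sub_self, zpow_zero]
    ring

lemma sum_zpow_deltaInv_right (hp0 : 0 < p) (d : ℕ → ℤ) (n k : ℕ) :
    ∑ i ∈ Ioc k n, (p : ℝ) ^ (deltaInv d k - deltaInv d i) = wordValue p (rightWord d n k) := by
  induction h : n - k generalizing k with
  | zero => simp [Ioc_eq_empty_of_le (by omega : n ≤ k), rightWord_of_le d (by omega : n ≤ k),
      wordValue]
  | succ t ih =>
    have hx : ∀ i, (p : ℝ) ^ (deltaInv d k - deltaInv d i)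
        = (p : ℝ) ^ (-d k) * (p : ℝ) ^ (deltaInv d (k + 1) - deltaInv d i) := fun i => by
      rw [← zpow_add₀ (by positivity), deltaInv_succ]; ring_nf
    rw [← Icc_add_one_left_eq_Ioc, ← Ioc_insert_left (by omega), sum_insert (by simp),
      rightWord_of_lt d (by omega), wordValue, ← ih (k + 1) (by omega)]
    simp only [hx, ← mul_sum, sub_self, zpow_zero]
    ring

lemma hp_update (a : ℕ → ℤ) {r c : ℕ} (hc : c < r) (v : ℤ) :
    hp p r (Function.update a c v) = hp p r a
      + ∑ k ∈ range c, ((p : ℝ) ^ (a k - v) - (p : ℝ) ^ (a k - a c))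
      + ∑ i ∈ Ioo c r, ((p : ℝ) ^ (v - a i) - (p : ℝ) ^ (a c - a i)) := by
  set X : ℕ → ℝ := fun i => if c < i then (p : ℝ) ^ (v - a i) - (p : ℝ) ^ (a c - a i) else 0
  set Y : ℕ → ℝ := fun k => if k < c then (p : ℝ) ^ (a k - v) - (p : ℝ) ^ (a k - a c) else 0
  have key : ∀ k i, (if k < i then (p : ℝ) ^ (Function.update a c v k - Function.update a c v i)
        else 0) - (if k < i then (p : ℝ) ^ (a k - a i) else 0)
      = (if k = c then X i else 0) + (if i = c then Y k else 0) := by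
    intro k i
    simp only [X, Y, Function.update_apply]
    split_ifs <;> first | omega | (subst_vars; simp_all)
  have hX : ∑ i ∈ range r, X i = ∑ i ∈ Ioo c r, ((p : ℝ) ^ (v - a i) - (p : ℝ) ^ (a c - a i)) := by
    rw [← sum_filter]; congr 1; ext i; simp; omega
  have hY : ∑ k ∈ range r, Y k = ∑ k ∈ range c, ((p : ℝ) ^ (a k - v) - (p : ℝ) ^ (a k - a c)) := by
    rw [← sum_filter]; congr 1; ext k; simp; omega
  rw [add_assoc, ← sub_eq_iff_eq_add', hp, hp, ← sum_sub_distrib]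
  simp only [← sum_sub_distrib, key, sum_add_distrib]
  simp only [sum_ite_eq', mem_range, hc, if_true]
  rw [sum_comm]
  simp only [sum_ite_eq', mem_range, hc, if_true, hX, hY, add_comm]

lemma deltaInv_comp_swap (d : ℕ → ℤ) (m : ℕ) :
    deltaInv (d ∘ Equiv.swap m (m + 1))
      = Function.update (deltaInv d) (m + 1) (deltaInv d m + d (m + 1)) := by
  have hlow : ∀ j ≤ m, deltaInv (d ∘ Equiv.swap m (m + 1)) j = deltaInv d j := fun j hj =>
    sum_congr rfl fun k hk => by
      rw [Function.comp_apply, Equiv.swap_apply_of_ne_of_ne] <;> simp at hk <;> omega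
  funext j
  rcases lt_trichotomy j (m + 1) with hj | rfl | hj
  · rw [Function.update_of_ne hj.ne, hlow j (by omega)]
  · simp [deltaInv_succ, hlow m le_rfl]
  · rw [Function.update_of_ne hj.ne', deltaInv, deltaInv]
    refine Equiv.Perm.sum_comp _ _ _ fun k hk => ?_
    simp only [Set.mem_ofPred_eq, coe_range, Set.mem_Iio] at hk ⊢
    by_contra hkj
    exact hk (Equiv.swap_apply_of_ne_of_ne (by omega) (by omega))

lemma hp_deltaInv_comp_swap (hp0 : 0 < p) (d : ℕ → ℤ) {n m : ℕ} (hm : m + 2 ≤ n) :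
    hp p (n + 1) (deltaInv (d ∘ Equiv.swap m (m + 1))) = hp p (n + 1) (deltaInv d)
      + ((p : ℝ) ^ (-d (m + 1)) - (p : ℝ) ^ (-d m))
        * (wordValue p (leftWord d m) - wordValue p (rightWord d n (m + 2))) := by
  set a := deltaInv d
  have hp' : (p : ℝ) ≠ 0 := by positivity
  have ha1 : a (m + 1) = a m + d m := deltaInv_succ d m
  have ha2 : a (m + 2) = a m + d m + d (m + 1) := by rw [← ha1]; exact deltaInv_succ d (m + 1)
  have hleft : ∀ k, (p : ℝ) ^ (a k - (a m + d (m + 1))) - (p : ℝ) ^ (a k - a (m + 1))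
      = ((p : ℝ) ^ (-d (m + 1)) - (p : ℝ) ^ (-d m)) * (p : ℝ) ^ (a k - a m) := fun k => by
    rw [sub_mul, ← zpow_add₀ hp', ← zpow_add₀ hp', ha1]; ring_nf
  have hright : ∀ i, (p : ℝ) ^ (a m + d (m + 1) - a i) - (p : ℝ) ^ (a (m + 1) - a i)
      = -((p : ℝ) ^ (-d (m + 1)) - (p : ℝ) ^ (-d m)) * (p : ℝ) ^ (a (m + 2) - a i) := fun i => by
    rw [neg_sub, sub_mul, ← zpow_add₀ hp', ← zpow_add₀ hp', ha1, ha2]; ring_nf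
  have hIoo : Ioo (m + 1) (n + 1) = insert (m + 2) (Ioc (m + 2) n) := by
    rw [Ioc_insert_left (by omega)]; ext i; simp; omega
  rw [deltaInv_comp_swap, hp_update _ (by omega : m + 1 < n + 1), sum_congr rfl fun k _ => hleft k,
    sum_congr rfl fun i _ => hright i, ← mul_sum, ← mul_sum, sum_range_succ,
    sum_zpow_deltaInv_left hp0, hIoo, sum_insert (by simp), sum_zpow_deltaInv_right hp0]
  simp only [sub_self, zpow_zero]
  ring

end Swap

/-- Lexicographic form of "no transposition of two adjacent letters lowers `h_p`", see
`hp_deltaInv_comp_swap` and `wordValue_lt_of_lex`. -/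
def IsSwapStable (n : ℕ) (d : ℕ → ℤ) : Prop :=
  ∀ m, m + 2 ≤ n →
    (d (m + 1) < d m → ¬ List.Lex (· > ·) (leftWord d m) (rightWord d n (m + 2))) ∧
    (d m < d (m + 1) → ¬ List.Lex (· > ·) (rightWord d n (m + 2)) (leftWord d m))

lemma admissible_deltaInv {s n : ℕ} {d : ℕ → ℤ} (hpos : ∀ j < n, 0 < d j)
    (hsum : ∑ j ∈ range n, d j = (s : ℤ) - 1) : Admissible s (n + 1) (deltaInv d) :=
  ⟨sum_range_zero d, hsum, fun i hi => by rw [deltaInv_succ]; linarith [hpos i (by omega)]⟩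

lemma isSwapStable_of_minimal {p s n : ℕ} {d : ℕ → ℤ} (hp3 : 3 ≤ p) (hpos : ∀ j < n, 0 < d j)
    (hsum : ∑ j ∈ range n, d j = (s : ℤ) - 1)
    (hmin : ∀ b, Admissible s (n + 1) b → hp p (n + 1) (deltaInv d) ≤ hp p (n + 1) b) :
    IsSwapStable n d := by
  intro m hm
  have hσ : ∀ j, j < n → Equiv.swap m (m + 1) j < n := fun j hj => by
    rw [Equiv.swap_apply_def]; split_ifs <;> omega
  have hadm : Admissible s (n + 1) (deltaInv (d ∘ Equiv.swap m (m + 1))) :=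
    admissible_deltaInv (fun j hj => hpos _ (hσ j hj)) <| by
      rw [← hsum]
      exact Equiv.Perm.sum_comp _ _ _ fun j hj => by
        by_contra hj'
        simp only [coe_range, Set.mem_Iio] at hj'
        exact hj (Equiv.swap_apply_of_ne_of_ne (by omega) (by omega))
  have hgain := hmin _ hadm
  rw [hp_deltaInv_comp_swap (by omega) d hm] at hgain
  have hL : ∀ x ∈ leftWord d m, 1 ≤ x := forall_mem_leftWord fun j hj => hpos j (by omega)
  have hR : ∀ x ∈ rightWord d n (m + 2), 1 ≤ x := forall_mem_rightWord hpos
  have hp1 : (1 : ℝ) < p := by exact_mod_cast (by omega : 1 < p)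
  constructor
  · intro hd hlex
    have hv := wordValue_lt_of_lex hp3 hlex hL hR
    have hx : (p : ℝ) ^ (-d m) < (p : ℝ) ^ (-d (m + 1)) := zpow_lt_zpow_right₀ hp1 (by omega)
    nlinarith
  · intro hd hlex
    have hv := wordValue_lt_of_lex hp3 hlex hR hL
    have hx : (p : ℝ) ^ (-d (m + 1)) < (p : ℝ) ^ (-d m) := zpow_lt_zpow_right₀ hp1 (by omega)
    nlinarith

lemma leftWord_reverse (d : ℕ → ℤ) {n m : ℕ} (hm : m ≤ n) :
    leftWord (fun j => d (n - 1 - j)) m = rightWord d n (n - m) := by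
  induction m with
  | zero => simp [rightWord_of_le]
  | succ m ih =>
    rw [leftWord_succ, ih (by omega), rightWord_of_lt d (by omega : n - (m + 1) < n)]
    congr 2 <;> omega

lemma rightWord_reverse (d : ℕ → ℤ) {n k : ℕ} (hk : k ≤ n) :
    rightWord (fun j => d (n - 1 - j)) n k = leftWord d (n - k) := by
  induction h : n - k generalizing k with
  | zero => simp [rightWord_of_le _ (by omega : n ≤ k)]
  | succ t ih =>
    rw [rightWord_of_lt _ (by omega), ih (by omega) (by omega), leftWord_succ,
      show t = n - 1 - k by omega]

lemma IsSwapStable.reverse {n : ℕ} {d : ℕ → ℤ} (h : IsSwapStable n d) :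
    IsSwapStable n (fun j => d (n - 1 - j)) := by
  intro m hm
  obtain ⟨h₁, h₂⟩ := h (n - 2 - m) (by omega)
  rw [show n - 2 - m + 2 = n - m by omega] at h₁ h₂
  rw [leftWord_reverse d (by omega), rightWord_reverse d hm, show n - (m + 2) = n - 2 - m by omega]
  simp only [show n - 1 - (m + 1) = n - 2 - m by omega, show n - 1 - m = n - 2 - m + 1 by omega]
  exact ⟨h₂, h₁⟩

/-- Around a pair `aa` followed by `(ba)ᵏ bb B`, with `C` the reversed word before the pair:
the boundary after the pair is unstable, or else the one before it is. -/
lemma lex_cons_or_lex_of_alternating {α : Type*} {R : α → α → Prop} {a b : α} (hab : R a b)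
    (B : List α) (k : ℕ) (C : List α) (hC : ∀ c ∈ C, c = a ∨ c = b) :
    List.Lex R (a :: C) ((List.replicate k [a, b]).flatten ++ b :: B) ∨
      ∃ C', C = b :: C' ∧
        List.Lex R (a :: b :: ((List.replicate k [a, b]).flatten ++ b :: B)) C' := by
  induction k generalizing C with
  | zero => exact .inl (.rel hab)
  | succ k ih =>
    simp only [List.replicate_succ, List.flatten_cons, List.cons_append, List.nil_append]
    match C, hC with
    | [], _ => exact .inl (.cons .nil)
    | c :: C₁, hC =>
      obtain rfl | rfl := hC c (by simp)
      · exact .inl (.cons (.rel hab))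
      match C₁, hC with
      | [], _ => exact .inl (.cons (.cons ((List.lex_nil_or_eq_nil _).resolve_right (by simp))))
      | c' :: C₂, hC =>
        obtain rfl | rfl := hC c' (by simp)
        · rcases ih C₂ (fun x hx => hC x (by simp [hx])) with h | ⟨C₃, rfl, h⟩
          · exact .inl (.cons (.cons h))
          · exact .inr ⟨_, rfl, .cons (.cons h)⟩
        · exact .inr ⟨_, rfl, .rel hab⟩

lemma rightWord_eq_alternating {d : ℕ → ℤ} {a b : ℤ} {n : ℕ} (k : ℕ) {s : ℕ}
    (hs : s + 2 * k ≤ n) (hd : ∀ i < 2 * k, d (s + i) = if Even i then a else b) :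
    rightWord d n s = (List.replicate k [a, b]).flatten ++ rightWord d n (s + 2 * k) := by
  induction k generalizing s with
  | zero => simp
  | succ k ih =>
    have h0 := hd 0 (by omega)
    have h1 := hd 1 (by omega)
    simp only [add_zero, Even.zero, if_true, Nat.not_even_one, if_false] at h0 h1
    rw [rightWord_of_lt d (by omega), rightWord_of_lt d (by omega), h0, h1,
      ih (s := s + 1 + 1) (by omega) fun i hi => by
        rw [show s + 1 + 1 + i = s + (i + 2) by ring, hd (i + 2) (by omega)]
        simp [Nat.even_add]]
    simp [List.replicate_succ, show s + 1 + 1 + 2 * k = s + 2 * (k + 1) by ring]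

lemma IsSwapStable.false_of_pair_lt {n : ℕ} {d : ℕ → ℤ} {a b : ℤ} (h : IsSwapStable n d)
    (hba : b < a) (hd : ∀ j < n, d j = a ∨ d j = b) {z y : ℕ} (hzy : z < y) (hyn : y + 1 < n)
    (hz : d z = a ∧ d (z + 1) = a) (hy : d y = b ∧ d (y + 1) = b) : False := by
  classical
  let P : ℕ → Prop := fun t =>
    ∃ z, z + t + 1 < n ∧ d z = a ∧ d (z + 1) = a ∧ d (z + t) = b ∧ d (z + t + 1) = b
  have hP : ∃ t, P t :=
    ⟨y - z, z, by omega, hz.1, hz.2, by rw [Nat.add_sub_cancel' hzy.le]; exact hy.1,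
      by rw [Nat.add_sub_cancel' hzy.le]; exact hy.2⟩
  obtain ⟨t, ⟨z, hzn, hz0, hz1, hy0, hy1⟩, hclosest⟩ : ∃ t, P t ∧ ∀ t' < t, ¬ P t' :=
    ⟨Nat.find hP, Nat.find_spec hP, fun _ => Nat.find_min hP⟩
  have ht : 2 ≤ t := by
    by_contra! ht
    interval_cases t
    · rw [add_zero, hz0] at hy0; exact hba.ne' hy0
    · rw [hz1] at hy0; exact hba.ne' hy0
  -- the closest such pairs are separated by an alternating word
  have halt : ∀ i, i + 1 ≤ t → d (z + 1 + i) = if Even i then a else b := by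
    intro i
    induction i with
    | zero => simp [hz1]
    | succ i ih =>
      intro hi
      have hprev := ih (by omega)
      rcases hd (z + 1 + (i + 1)) (by omega) with hcur | hcur <;> by_cases he : Even i <;>
        simp only [he, if_true, if_false, Nat.even_add_one, not_true, not_false_eq_true] at hprev ⊢
      · exact (hclosest (t - 1 - i) (by omega) ⟨z + 1 + i, by omega, hprev, hcur,
          by rw [show z + 1 + i + (t - 1 - i) = z + t by omega]; exact hy0,
          by rw [show z + 1 + i + (t - 1 - i) = z + t by omega]; exact hy1⟩).elim
      · exact hcur
      · exact hcur
      · exact (hclosest (i + 1) (by omega) ⟨z, by omega, hz0, hz1, by rw [← hprev]; ring_nf,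
          by rw [← hcur]; ring_nf⟩).elim
  obtain ⟨k, rfl⟩ : ∃ k, t = 2 * k + 2 := by
    have hlast := halt (t - 1) (by omega)
    rw [show z + 1 + (t - 1) = z + t by omega, hy0] at hlast
    split_ifs at hlast with he
    · exact absurd hlast hba.ne
    · obtain ⟨k, hk⟩ := Nat.not_even_iff_odd.mp he
      exact ⟨k, by omega⟩
  have hz2 : d (z + 2) = b := by simpa using halt 1 (by omega)
  have hright : rightWord d n (z + 3)
      = (List.replicate k [a, b]).flatten ++ b :: rightWord d n (z + 2 * k + 4) := by
    rw [rightWord_eq_alternating (a := a) (b := b) k (s := z + 3) (by omega) fun i hi => by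
        rw [show z + 3 + i = z + 1 + (i + 2) by omega, halt (i + 2) (by omega)]
        simp [Nat.even_add],
      rightWord_of_lt d (by omega), show z + 3 + 2 * k = z + (2 * k + 2) + 1 by omega, hy1,
      show z + (2 * k + 2) + 1 + 1 = z + 2 * k + 4 by omega]
  rcases lex_cons_or_lex_of_alternating (R := (· > ·)) hba (rightWord d n (z + 2 * k + 4)) k
    (leftWord d z) (forall_mem_leftWord fun j hj => hd j (by omega)) with hlex | ⟨C', hC, hlex⟩
  · refine (h (z + 1) (by omega)).1 (by rw [hz1, hz2]; exact hba) ?_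
    rwa [leftWord_succ, hz0, hright]
  · cases z with
    | zero => simp at hC
    | succ z =>
      obtain ⟨hb, rfl⟩ := List.cons.inj (leftWord_succ d z ▸ hC)
      refine (h z (by omega)).2 (by rw [hb, hz0]; exact hba) ?_
      rwa [rightWord_of_lt d (by omega), rightWord_of_lt d (by omega), hz1, hz2, hright]

section Counting

variable {n : ℕ} {d : ℕ → ℤ} {q : ℤ}

lemma card_filter_eq_add_one (hd : ∀ j < n, d j = q ∨ d j = q + 1) :
    (((range n).filter (fun j => d j = q + 1)).card : ℤ) = ∑ j ∈ range n, d j - n * q := by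
  have hsplit : ∀ j ∈ range n, d j = q + if d j = q + 1 then 1 else 0 := fun j hj => by
    rcases hd j (mem_range.1 hj) with h | h <;> simp [h]
  rw [sum_congr rfl hsplit, sum_add_distrib, sum_const, card_range, sum_boole, nsmul_eq_mul]
  ring

lemma card_filter_eq_add_card_filter_eq_add_one (hd : ∀ j < n, d j = q ∨ d j = q + 1) :
    ((range n).filter (fun j => d j = q)).card + ((range n).filter (fun j => d j = q + 1)).card
      = n := by
  conv_rhs => rw [← card_range n, ← card_filter_add_card_filter_not (fun j => d j = q)]
  congr 2
  refine filter_congr fun j hj => ?_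
  rcases hd j (mem_range.1 hj) with h | h <;> simp [h]

lemma card_filter_eq_add_one_eq_mod {s : ℕ} (hs : 1 ≤ s) (hq : q = ((s - 1) / n : ℕ))
    (hd : ∀ j < n, d j = q ∨ d j = q + 1) (hsum : ∑ j ∈ range n, d j = (s : ℤ) - 1) :
    ((range n).filter (fun j => d j = q + 1)).card = (s - 1) % n := by
  have hbig := card_filter_eq_add_one hd
  have hdiv : (s : ℤ) - 1 = n * q + (((s - 1) % n : ℕ) : ℤ) := by
    rw [hq, show (s : ℤ) - 1 = ((s - 1 : ℕ) : ℤ) by omega]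
    exact_mod_cast (Nat.div_add_mod (s - 1) n).symm
  rw [← Nat.cast_inj (R := ℤ)]
  linarith

/-- Otherwise `j ↦ j + 1` maps the `q`s other than the last one injectively to the `q + 1`s
other than `d (z + 1)`. -/
lemma exists_adjacent_eq_of_adjacent_eq_add_one (hd : ∀ j < n, d j = q ∨ d j = q + 1)
    (hlast : d (n - 1) = q)
    (hcard : 2 * ((range n).filter (fun j => d j = q + 1)).card < n) {z : ℕ} (hz : z + 1 < n)
    (hzz : d z = q + 1 ∧ d (z + 1) = q + 1) : ∃ u, u + 1 < n ∧ d u = q ∧ d (u + 1) = q := by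
  by_contra! hno
  have hinj : (((range n).filter (fun j => d j = q)).erase (n - 1)).card
      ≤ (((range n).filter (fun j => d j = q + 1)).erase (z + 1)).card := by
    refine card_le_card_of_injOn (· + 1) (fun j hj => ?_) (fun _ _ _ _ h => Nat.succ_injective h)
    simp only [coe_erase, coe_filter, mem_range, Set.mem_sdiff, Set.mem_ofPred_eq,
      Set.mem_singleton_iff] at hj ⊢
    obtain ⟨⟨hjn, hj⟩, hj'⟩ := hj
    refine ⟨⟨by omega, ?_⟩, fun h => by simp [show j = z by omega, hzz.1] at hj⟩
    exact (hd (j + 1) (by omega)).resolve_left (hno j (by omega) hj)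
  rw [card_erase_of_mem (by simp; omega), card_erase_of_mem (by simp [hzz.2]; omega)] at hinj
  have := card_filter_eq_add_card_filter_eq_add_one hd
  omega

end Counting

lemma IsSwapStable.not_adjacent_eq_add_one {n : ℕ} {d : ℕ → ℤ} {q : ℤ} (h : IsSwapStable n d)
    (hd : ∀ j < n, d j = q ∨ d j = q + 1) (hlast : d (n - 1) = q)
    (hcard : 2 * ((range n).filter (fun j => d j = q + 1)).card < n) :
    ∀ j, j + 1 < n → ¬ (d j = q + 1 ∧ d (j + 1) = q + 1) := by
  intro z hz hzz
  obtain ⟨u, hu, hu0, hu1⟩ := exists_adjacent_eq_of_adjacent_eq_add_one hd hlast hcard hz hzz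
  have hd' : ∀ j < n, d j = q + 1 ∨ d j = q := fun j hj => (hd j hj).symm
  rcases lt_or_gt_of_ne (show u ≠ z by rintro rfl; simp [hu0] at hzz) with huz | hzu
  · refine h.reverse.false_of_pair_lt (lt_add_one q) (fun j hj => hd' _ (by omega))
      (z := n - 2 - z) (y := n - 2 - u) (by omega) (by omega) ?_ ?_
    · simp only [show n - 1 - (n - 2 - z) = z + 1 by omega,
        show n - 1 - (n - 2 - z + 1) = z by omega, hzz, and_self]
    · simp only [show n - 1 - (n - 2 - u) = u + 1 by omega,
        show n - 1 - (n - 2 - u + 1) = u by omega, hu0, hu1, and_self]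
  · exact h.false_of_pair_lt (lt_add_one q) hd' hzu hu hzz ⟨hu0, hu1⟩

lemma exists_isMaxRun_iff {n : ℕ} {d : ℕ → ℤ} {v : ℤ} {i : ℕ} :
    (∃ l, IsMaxRun n d v i l) ↔ i < n ∧ d i = v ∧ (0 < i → d (i - 1) ≠ v) := by
  classical
  constructor
  · rintro ⟨l, hl, hln, hv, hleft, -⟩
    exact ⟨by omega, by simpa using hv 0 hl, hleft⟩
  · rintro ⟨hi, hv, hleft⟩
    have hex : ∃ l, ¬ (i + l < n ∧ d (i + l) = v) := ⟨n, by omega⟩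
    have hrun : ∀ k < Nat.find hex, i + k < n ∧ d (i + k) = v := fun k hk =>
      not_not.1 (Nat.find_min hex hk)
    have hpos : 0 < Nat.find hex := Nat.pos_of_ne_zero fun h0 => by
      have := Nat.find_spec hex
      rw [h0, add_zero] at this
      exact this ⟨hi, hv⟩
    refine ⟨Nat.find hex, hpos, ?_, fun k hk => (hrun k hk).2, hleft, fun h => ?_⟩
    · have := (hrun _ (Nat.sub_one_lt_of_lt hpos)).1
      omega
    · exact (not_and.1 (Nat.find_spec hex)) h

lemma IsMaxRun.length_eq_one {n : ℕ} {d : ℕ → ℤ} {v : ℤ} {i l : ℕ} (h : IsMaxRun n d v i l)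
    (hno : ∀ j, j + 1 < n → ¬ (d j = v ∧ d (j + 1) = v)) : l = 1 := by
  obtain ⟨hl, hln, hv, -⟩ := h
  by_contra hl1
  exact hno i (by omega) ⟨by simpa using hv 0 hl, hv 1 (by omega)⟩

/-- A maximal run of `q`s starts at `0` or right after a `q + 1`. -/
lemma ncard_isMaxRun_eq {n : ℕ} {d : ℕ → ℤ} {q : ℤ} (hd : ∀ j < n, d j = q ∨ d j = q + 1)
    (hn : 0 < n) (hfirst : d 0 = q) (hlast : d (n - 1) = q)
    (hno : ∀ j, j + 1 < n → ¬ (d j = q + 1 ∧ d (j + 1) = q + 1)) :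
    {i | ∃ l, IsMaxRun n d q i l}.ncard
      = ((range n).filter (fun j => d j = q + 1)).card + 1 := by
  classical
  have hset : {i | ∃ l, IsMaxRun n d q i l}
      = ↑(insert 0 (((range n).filter (fun j => d j = q + 1)).image (· + 1))) := by
    ext i
    simp only [Set.mem_ofPred_eq, exists_isMaxRun_iff, coe_insert, coe_image, coe_filter,
      mem_range, Set.mem_insert_iff, Set.mem_image]
    constructor
    · rintro ⟨hi, hv, hleft⟩
      rcases Nat.eq_zero_or_pos i with rfl | hi0
      · exact .inl rfl
      · exact .inr ⟨i - 1, ⟨by omega, (hd _ (by omega)).resolve_left (hleft hi0)⟩, by omega⟩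
    · rintro (rfl | ⟨j, ⟨hj, hjv⟩, rfl⟩)
      · exact ⟨hn, hfirst, by omega⟩
      · have hjn : j + 1 < n := by
          by_contra
          rw [show j = n - 1 by omega, hlast] at hjv
          omega
        refine ⟨hjn, (hd _ hjn).resolve_right fun h => hno j hjn ⟨hjv, h⟩, fun _ => ?_⟩
        simp [hjv]
  rw [hset, Set.ncard_coe_finset, card_insert_of_notMem (by simp),
    card_image_of_injective _ (add_left_injective 1)]

theorem stmt12_general (p s r : ℕ) (hp3 : 3 ≤ p) (hr : 3 ≤ r) (hrs : r < s)
    (g : ℕ) (hgdef : g = (s - 1) % (r - 1)) (hg : 2 * g ≤ r - 2)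
    (fq : ℤ) (hfq : fq = (((s - 1) / (r - 1) : ℕ) : ℤ))
    (d : ℕ → ℤ)
    (hmem : ∀ j < r - 1, d j = fq ∨ d j = fq + 1)
    (hsum : ∑ j ∈ Finset.range (r - 1), d j = (s : ℤ) - 1)
    (hframe : d 0 = fq ∧ d (r - 2) = fq)
    (hmin : ∀ b : ℕ → ℤ, Admissible s r b → hp p r (deltaInv d) ≤ hp p r b) :
    (∀ i l, IsMaxRun (r - 1) d (fq + 1) i l → l = 1) ∧
    ((Finset.range (r - 1)).filter (fun j => d j = fq + 1)).card = g ∧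
    (∀ j, j + 1 < r - 1 → ¬ (d j = fq + 1 ∧ d (j + 1) = fq + 1)) ∧
    ((Finset.range (r - 1)).filter (fun j => d j = fq)).card = r - 1 - g ∧
    {i | ∃ l, IsMaxRun (r - 1) d fq i l}.ncard = g + 1 := by
  obtain ⟨n, rfl⟩ : ∃ n, r = n + 1 := ⟨r - 1, by omega⟩
  simp only [Nat.add_sub_cancel] at hgdef hfq hmem hsum ⊢
  have hlast : d (n - 1) = fq := by rw [← hframe.2]; congr 1
  have hpos : ∀ j < n, 0 < d j := fun j hj => by
    have : 1 ≤ fq := hfq ▸ mod_cast (Nat.one_le_div_iff (by omega)).2 (by omega)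
    rcases hmem j hj with h | h <;> omega
  have hcard : ((range n).filter (fun j => d j = fq + 1)).card = g :=
    hgdef ▸ card_filter_eq_add_one_eq_mod (by omega) hfq hmem hsum
  have hno := (isSwapStable_of_minimal hp3 hpos hsum hmin).not_adjacent_eq_add_one hmem hlast
    (by omega)
  refine ⟨fun i l h => h.length_eq_one hno, hcard, hno, ?_, ?_⟩
  · have := card_filter_eq_add_card_filter_eq_add_one hmem
    omega
  · rw [ncard_isMaxRun_eq hmem (by omega) hframe.1 hlast hno, hcard]

/-- Proposition 5.1(ii) (partly): if `(r-1) ∤ (s-1)`, `g ≡ s-1 mod (r-1)` is the least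
positive residue, `d ∈ Biv*(s,r)` (entries in `{[q], [q]+1}`, summing to `s-1`, first and
last entries `[q]`) with `h_p(δ⁻¹(d)) = min h_p`, and `2g ≤ r-2`, then `θ_max(d) = 1`:
every maximal `[q]+1`-block of `d` is a singleton; hence `d` has exactly `g` entries
`[q]+1`, no two adjacent, exactly `r-g-1` entries `[q]`, and exactly `g+1` maximal
`[q]`-blocks (whose average length is therefore `q₁ = (r-g-1)/(g+1)`). -/
theorem stmt12 (p s r : ℕ) (hpp : p.Prime) (hp3 : 3 ≤ p) (hr : 3 ≤ r) (hrs : r < s)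
    (hndvd1 : ¬ (r - 1) ∣ (s - 1))
    (g : ℕ) (hgdef : g = (s - 1) % (r - 1)) (hg : 2 * g ≤ r - 2)
    (fq : ℤ) (hfq : fq = (((s - 1) / (r - 1) : ℕ) : ℤ))
    (d : ℕ → ℤ)
    (hmem : ∀ j < r - 1, d j = fq ∨ d j = fq + 1)
    (hsum : ∑ j ∈ Finset.range (r - 1), d j = (s : ℤ) - 1)
    (hframe : d 0 = fq ∧ d (r - 2) = fq)
    (hmin : ∀ b : ℕ → ℤ, Admissible s r b → hp p r (deltaInv d) ≤ hp p r b) :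
    (∀ i l, IsMaxRun (r - 1) d (fq + 1) i l → l = 1) ∧
    ((Finset.range (r - 1)).filter (fun j => d j = fq + 1)).card = g ∧
    (∀ j, j + 1 < r - 1 → ¬ (d j = fq + 1 ∧ d (j + 1) = fq + 1)) ∧
    ((Finset.range (r - 1)).filter (fun j => d j = fq)).card = r - 1 - g ∧
    {i | ∃ l, IsMaxRun (r - 1) d fq i l}.ncard = g + 1 :=
  stmt12_general p s r hp3 hr hrs g hgdef hg fq hfq d hmem hsum hframe hmin
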